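/- If Ω is a 𝒱-module of distributional sections of E and there exists a nondegenerate submodule R ⊂ Γ(·, E*) with R ⊆ S(Ω) (the smoothness multipliers of Ω), then every section in Ω is smooth. -/
import Mathlib


/-- Abstract model (same setting as for smoothness multipliers): `A` = smooth functions,
`B` = distributions with submodule `S` of smooth ones, `LB` the action of vector fields of
`𝒱`, `D`/`Dstar` the connection on distributional sections `Fin r → B` and the dual
connection on smooth sections `Fin r → A` of `E*`, related by the pairing identity.
If `Ω` is a `𝒱`-module of distributional sections and `R` is a nondegenerate submodule of
smooth sections of `E*` (its `𝒱`-hull is everything: every `Dstar`-closed submodule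
containing `R` is `⊤`) consisting of smoothness multipliers of `Ω`, then every section in
`Ω` is smooth (all its components lie in `S`). -/
theorem stmt13 {A B G : Type*} [CommRing A] [AddCommGroup B] [Module A B]
    (S : Submodule A B) (LB : G → B →+ B) (hLBS : ∀ (g : G) (x : B), x ∈ S → LB g x ∈ S)
    (r : ℕ) (D : G → (Fin r → B) → (Fin r → B)) (Dstar : G → (Fin r → A) → (Fin r → A))
    (hdual : ∀ (g : G) (η : Fin r → A) (ω : Fin r → B),
      (∑ i, Dstar g η i • ω i) = LB g (∑ i, η i • ω i) - ∑ i, η i • (D g ω) i)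
    (Ω : Set (Fin r → B)) (hΩ : ∀ (g : G) (ω : Fin r → B), ω ∈ Ω → D g ω ∈ Ω)
    (R : Set (Fin r → A))
    (hR : ∀ η ∈ R, ∀ ω ∈ Ω, (∑ i, η i • ω i) ∈ S)
    (hnondeg : ∀ U : Submodule A (Fin r → A), R ⊆ (U : Set (Fin r → A)) →
      (∀ (g : G) (η : Fin r → A), η ∈ U → Dstar g η ∈ U) → U = ⊤) :
    ∀ ω ∈ Ω, ∀ i : Fin r, ω i ∈ S := by
  set T : Submodule A (Fin r → A) :=
    { carrier := {η | ∀ ω ∈ Ω, (∑ i, η i • ω i) ∈ S}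
      add_mem' := by
        intro a b ha hb ω hω
        have : (∑ i, (a + b) i • ω i) = (∑ i, a i • ω i) + ∑ i, b i • ω i := by
          rw [← Finset.sum_add_distrib]
          exact Finset.sum_congr rfl (fun i _ => by simp [add_smul])
        rw [this]; exact S.add_mem (ha ω hω) (hb ω hω)
      zero_mem' := by intro ω hω; simp
      smul_mem' := by
        intro c a ha ω hω
        have : (∑ i, (c • a) i • ω i) = c • ∑ i, a i • ω i := by
          rw [Finset.smul_sum]
          exact Finset.sum_congr rfl (fun i _ => by simp [smul_smul])
        rw [this]; exact S.smul_mem c (ha ω hω) } with hT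
  have hRT : R ⊆ (T : Set (Fin r → A)) := fun η hη ω hω => hR η hη ω hω
  have hTclosed : ∀ (g : G) (η : Fin r → A), η ∈ T → Dstar g η ∈ T := by
    intro g η hη ω hω
    rw [hdual g η ω]
    exact S.sub_mem (hLBS g _ (hη ω hω)) (hη (D g ω) (hΩ g ω hω))
  have hTtop := hnondeg T hRT hTclosed
  intro ω hω i
  have hmem : (Pi.single i (1 : A)) ∈ T := hTtop ▸ Submodule.mem_top
  have := hmem ω hω
  simpa [Pi.single_apply] using this
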